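/- Let (Ge, Go) be a connected bipartite signed graph on a finite nonempty vertex type V, and let A ∈ S(Ge, Go) be positive semidefinite. Then the nullity of A is at most 1. -/

import Mathlib

open Matrix

/-- The set `S(Ge, Go)` of real symmetric matrices compatible with the signed graph
encoded by the pair of simple graphs `(Ge, Go)` (even graph / odd graph). -/
def SignedSet {V : Type*} (Ge Go : SimpleGraph V) : Set (Matrix V V ℝ) :=
  {A | A.IsSymm ∧ ∀ i j,
    ((Ge.Adj i j ∧ ¬ Go.Adj i j) → A i j < 0) ∧
    ((Go.Adj i j ∧ ¬ Ge.Adj i j) → 0 < A i j) ∧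
    ((i ≠ j ∧ ¬ Ge.Adj i j ∧ ¬ Go.Adj i j) → A i j = 0)}

/-- The nullity of a matrix: the dimension of its kernel. -/
noncomputable def matNullity {V : Type*} [Fintype V] (A : Matrix V V ℝ) : ℕ :=
  Module.finrank ℝ (LinearMap.ker A.mulVecLin)

/-- The Strong Arnold Property for a matrix with respect to a signed graph `(Ge, Go)`. -/
def HasSAP {V : Type*} [Fintype V] (Ge Go : SimpleGraph V) (A : Matrix V V ℝ) : Prop :=
  ∀ X : Matrix V V ℝ, X.IsSymm →
    (∀ i j, (i = j ∨ (Ge ⊔ Go).Adj i j) → X i j = 0) →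
    A * X = 0 → X = 0

/-- `ν(Ge, Go)`: the maximum nullity of a positive semidefinite matrix in `S(Ge, Go)`
having the Strong Arnold Property. -/
noncomputable def nuSigned {V : Type*} [Fintype V] (Ge Go : SimpleGraph V) : ℕ :=
  sSup {n | ∃ A ∈ SignedSet Ge Go, A.PosSemidef ∧ HasSAP Ge Go A ∧ matNullity A = n}

/-- `M₊(Ge, Go)`: the maximum nullity of a positive semidefinite matrix in `S(Ge, Go)`. -/
noncomputable def MplusSigned {V : Type*} [Fintype V] (Ge Go : SimpleGraph V) : ℕ :=
  sSup {n | ∃ A ∈ SignedSet Ge Go, A.PosSemidef ∧ matNullity A = n}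

/-- A signed graph `(Ge, Go)` is bipartite (balanced) if some set `U` of vertices meets
every odd edge in exactly one end and every even edge in both ends or neither end. -/
def IsBalanced {V : Type*} (Ge Go : SimpleGraph V) : Prop :=
  ∃ U : Set V, (∀ i j, Go.Adj i j → ((i ∈ U) ↔ j ∉ U)) ∧
    (∀ i j, Ge.Adj i j → ((i ∈ U) ↔ j ∈ U))

/-! Switching the signs of the vertices in `U` (conjugating `A` by the diagonal `±1` matrix `D`
of a balancing set) turns every edge of a balanced signed graph into a negative entry, so
`B = D A D` is a positive semidefinite matrix with nonpositive off-diagonal entries, negative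
exactly on the edges. For such `B` and a kernel vector `x`, the vector `|x|` has
`|x|ᵀ B |x| ≤ xᵀ B x = 0`, so it lies in the kernel too; a nonnegative kernel vector vanishing
at a vertex vanishes at its neighbours, hence everywhere by connectivity. So evaluation at one
vertex is injective on the kernel, and the nullity is at most one. -/

theorem SimpleGraph.Preconnected.forall_of_adj {V : Type*} {G : SimpleGraph V}
    (hG : G.Preconnected) {p : V → Prop} (hp : ∀ u w, G.Adj u w → p u → p w)
    {v : V} (hv : p v) (w : V) : p w := by
  obtain ⟨q⟩ := hG v w
  induction q with
  | nil => exact hv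
  | cons hadj _ ih => exact ih (hp _ _ hadj hv)

theorem IsBalanced.exists_sign {V : Type*} {Ge Go : SimpleGraph V} (h : IsBalanced Ge Go) :
    ∃ s : V → ℝ, (∀ i, s i * s i = 1) ∧ (∀ i j, Ge.Adj i j → s i * s j = 1) ∧
      (∀ i j, Go.Adj i j → s i * s j = -1) := by
  classical
  obtain ⟨U, hUo, hUe⟩ := h
  refine ⟨fun i => if i ∈ U then 1 else -1, fun i => ?_, ?_, ?_⟩
  · by_cases hi : i ∈ U <;> simp [hi]
  · intro i j hij
    have := hUe i j hij
    by_cases hi : i ∈ U <;> by_cases hj : j ∈ U <;> simp_all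
  · intro i j hij
    have := hUo i j hij
    by_cases hi : i ∈ U <;> by_cases hj : j ∈ U <;> simp_all

section Switching

variable {V : Type*} {Ge Go : SimpleGraph V} {A : Matrix V V ℝ} {s : V → ℝ}

theorem mul_apply_mul_neg_of_mem_signedSet (hA : A ∈ SignedSet Ge Go)
    (hse : ∀ i j, Ge.Adj i j → s i * s j = 1) (hso : ∀ i j, Go.Adj i j → s i * s j = -1)
    {i j : V} (hij : (Ge ⊔ Go).Adj i j) : s i * A i j * s j < 0 := by
  have hswap : s i * A i j * s j = A i j * (s i * s j) := by ring
  rcases hij with he | ho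
  · have hno : ¬ Go.Adj i j := fun ho => by linarith [hse i j he, hso i j ho]
    rw [hswap, hse i j he, mul_one]
    exact (hA.2 i j).1 ⟨he, hno⟩
  · have hne : ¬ Ge.Adj i j := fun he => by linarith [hse i j he, hso i j ho]
    rw [hswap, hso i j ho]
    linarith [(hA.2 i j).2.1 ⟨ho, hne⟩]

theorem mul_apply_mul_eq_zero_of_mem_signedSet (hA : A ∈ SignedSet Ge Go) {i j : V}
    (hne : i ≠ j) (hij : ¬ (Ge ⊔ Go).Adj i j) : s i * A i j * s j = 0 := by
  rw [SimpleGraph.sup_adj, not_or] at hij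
  rw [(hA.2 i j).2.2 ⟨hne, hij⟩, mul_zero, zero_mul]

end Switching

section NonpositiveOffDiagonal

variable {V : Type*} [Fintype V] {B : Matrix V V ℝ}

theorem dotProduct_mulVec_abs_le (hB : ∀ i j, i ≠ j → B i j ≤ 0) (x : V → ℝ) :
    (fun i => |x i|) ⬝ᵥ B *ᵥ (fun i => |x i|) ≤ x ⬝ᵥ B *ᵥ x := by
  simp only [dotProduct, mulVec, Finset.mul_sum]
  refine Finset.sum_le_sum fun i _ => Finset.sum_le_sum fun j _ => ?_
  rcases eq_or_ne i j with rfl | hij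
  · exact le_of_eq (by linear_combination B i i * abs_mul_abs_self (x i))
  · have hx : x i * x j ≤ |x i| * |x j| := abs_mul (x i) (x j) ▸ le_abs_self _
    nlinarith [mul_le_mul_of_nonpos_left hx (hB i j hij)]

theorem Matrix.PosSemidef.mulVec_abs_eq_zero (hpsd : B.PosSemidef)
    (hB : ∀ i j, i ≠ j → B i j ≤ 0) {x : V → ℝ} (hx : B *ᵥ x = 0) :
    B *ᵥ (fun i => |x i|) = 0 := by
  refine (hpsd.dotProduct_mulVec_zero_iff _).mp (le_antisymm ?_ ?_)
  · simpa [hx] using dotProduct_mulVec_abs_le hB x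
  · simpa using hpsd.dotProduct_mulVec_nonneg (fun i => |x i|)

theorem apply_eq_zero_of_mulVec_eq_zero_of_apply_eq_zero (hB : ∀ i j, i ≠ j → B i j ≤ 0)
    {y : V → ℝ} (hy : B *ᵥ y = 0) (hy0 : 0 ≤ y) {k j : V} (hk : y k = 0) (hkj : B k j < 0) :
    y j = 0 := by
  have hterms : ∀ l ∈ Finset.univ, B k l * y l ≤ 0 := by
    intro l _
    rcases eq_or_ne k l with rfl | hkl
    · simp [hk]
    · exact mul_nonpos_of_nonpos_of_nonneg (hB k l hkl) (hy0 l)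
  have hsum : ∑ l, B k l * y l = 0 := congrFun hy k
  have hkj' := (Finset.sum_eq_zero_iff_of_nonpos hterms).mp hsum j (Finset.mem_univ j)
  exact (mul_eq_zero.mp hkj').resolve_left hkj.ne

theorem Matrix.PosSemidef.eq_zero_of_mulVec_eq_zero_of_apply_eq_zero {G : SimpleGraph V}
    (hG : G.Preconnected) (hpsd : B.PosSemidef)
    (hzero : ∀ i j, i ≠ j → ¬ G.Adj i j → B i j = 0)
    (hneg : ∀ i j, G.Adj i j → B i j < 0)
    {x : V → ℝ} (hx : B *ᵥ x = 0) {v : V} (hv : x v = 0) : x = 0 := by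
  have hB : ∀ i j, i ≠ j → B i j ≤ 0 := fun i j hij => by
    by_cases hadj : G.Adj i j
    · exact (hneg i j hadj).le
    · exact (hzero i j hij hadj).le
  have habs := hpsd.mulVec_abs_eq_zero hB hx
  have hprop : ∀ u w, G.Adj u w → |x u| = 0 → |x w| = 0 := fun u w huw hu =>
    apply_eq_zero_of_mulVec_eq_zero_of_apply_eq_zero hB habs (fun i => abs_nonneg (x i)) hu
      (hneg u w huw)
  funext w
  exact abs_eq_zero.mp (hG.forall_of_adj (p := fun u => |x u| = 0) hprop (v := v) (by simp [hv]) w)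

end NonpositiveOffDiagonal

theorem matNullity_le_one_of_forall_eq_zero {V : Type*} [Fintype V] {A : Matrix V V ℝ} (v : V)
    (h : ∀ x, A *ᵥ x = 0 → x v = 0 → x = 0) : matNullity A ≤ 1 := by
  have hinj : Function.Injective
      ((LinearMap.proj v : (V → ℝ) →ₗ[ℝ] ℝ).comp (LinearMap.ker A.mulVecLin).subtype) := by
    rw [← LinearMap.ker_eq_bot, LinearMap.ker_eq_bot']
    rintro ⟨x, hx⟩ hxv
    exact Subtype.ext (h x hx hxv)
  simpa [matNullity] using LinearMap.finrank_le_finrank_of_injective hinj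

/-- In a connected bipartite signed graph, any positive semidefinite matrix
in `S(Ge, Go)` has nullity at most 1. -/
theorem stmt1 {V : Type*} [Fintype V] [DecidableEq V] [Nonempty V]
    (Ge Go : SimpleGraph V)
    (hconn : (Ge ⊔ Go).Connected)
    (hbip : IsBalanced Ge Go)
    (A : Matrix V V ℝ) (hA : A ∈ SignedSet Ge Go) (hpsd : A.PosSemidef) :
    matNullity A ≤ 1 := by
  obtain ⟨s, hss, hse, hso⟩ := hbip.exists_sign
  set D := diagonal s
  have hDD : D * D = 1 := by simp [D, diagonal_mul_diagonal, hss]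
  have hentry : ∀ i j, (D * A * D) i j = s i * A i j * s j := by simp [D]
  have hpsdB : (D * A * D).PosSemidef := by
    simpa [D] using hpsd.mul_mul_conjTranspose_same D
  obtain ⟨v⟩ := ‹Nonempty V›
  refine matNullity_le_one_of_forall_eq_zero v fun x hx hxv => ?_
  have hDx : D *ᵥ x = 0 := by
    refine hpsdB.eq_zero_of_mulVec_eq_zero_of_apply_eq_zero hconn.preconnected
      (fun i j hij hadj => hentry i j ▸ mul_apply_mul_eq_zero_of_mem_signedSet hA hij hadj)
      (fun i j hadj => hentry i j ▸ mul_apply_mul_neg_of_mem_signedSet hA hse hso hadj)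
      ?_ (v := v) ?_
    · rw [mulVec_mulVec, mul_assoc (D * A), hDD, mul_one, ← mulVec_mulVec, hx, mulVec_zero]
    · rw [mulVec_diagonal, hxv, mul_zero]
  simpa [mulVec_mulVec, hDD] using congrArg (D *ᵥ ·) hDx
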